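/- Let φ(x,y,u) = u(1−y) − x²/2 on ℝ³, and define the polynomial vector fields e₁ = (1−y)∂ₓ + x∂ᵤ, e₂ = (1−y)∂_y + u∂ᵤ, e₃ = x∂ₓ + 2u∂ᵤ, e₄ = −u∂ₓ + x∂_y on ℝ³. Then identically on ℝ³: e₁(φ) = 0, e₂(φ) = 0, e₃(φ) = 2φ, e₄(φ) = 0. In particular all four vector fields are tangent to the surface {φ = 0} at every point of {φ = 0}. -/

import Mathlib

/-!
The differential of `φ = u(1−y) − x²/2` is `dφ = (1−y) du − u dy − x dx`; pairing it with each
field is a polynomial identity. For `e₃` this is Euler's relation: `e₃` is the weighted Euler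
field for the weights `(1, 0, 2)` of `(x, y, u)`, in which `φ` is homogeneous of degree 2.
-/

/-- `φ(x,y,u) = u(1−y) − x²/2`. -/
noncomputable def phiFlat : ℝ × ℝ × ℝ → ℝ := fun p => p.2.2 * (1 - p.2.1) - p.1 ^ 2 / 2

/-- `e₁ = (1−y)∂ₓ + x∂ᵤ`. -/
noncomputable def e1Flat : ℝ × ℝ × ℝ → ℝ × ℝ × ℝ := fun p => (1 - p.2.1, 0, p.1)

/-- `e₂ = (1−y)∂_y + u∂ᵤ`. -/
noncomputable def e2Flat : ℝ × ℝ × ℝ → ℝ × ℝ × ℝ := fun p => (0, 1 - p.2.1, p.2.2)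

/-- `e₃ = x∂ₓ + 2u∂ᵤ`. -/
noncomputable def e3Flat : ℝ × ℝ × ℝ → ℝ × ℝ × ℝ := fun p => (p.1, 0, 2 * p.2.2)

/-- `e₄ = −u∂ₓ + x∂_y`. -/
noncomputable def e4Flat : ℝ × ℝ × ℝ → ℝ × ℝ × ℝ := fun p => (-p.2.2, p.1, 0)

theorem fderiv_phiFlat_apply (p v : ℝ × ℝ × ℝ) :
    fderiv ℝ phiFlat p v = (1 - p.2.1) * v.2.2 - p.2.2 * v.2.1 - p.1 * v.1 := by
  -- `x ^ 2 / 2` is definitionally `x ^ 2 * 2⁻¹`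
  have h : HasFDerivAt phiFlat _ p :=
    (hasFDerivAt_snd.snd.mul (hasFDerivAt_snd.fst.const_sub 1)).sub
      (((hasFDerivAt_fst (𝕜 := ℝ)).pow 2).mul_const (2⁻¹ : ℝ))
  rw [h.fderiv]
  simp only [smul_neg, Nat.add_one_sub_one, pow_one, nsmul_eq_mul, Nat.cast_ofNat,
    sub_apply, add_apply, neg_apply, smul_apply, ContinuousLinearMap.comp_apply,
    ContinuousLinearMap.coe_snd', ContinuousLinearMap.coe_fst', smul_eq_mul]
  ring

theorem fderiv_phiFlat_e1Flat (p : ℝ × ℝ × ℝ) : fderiv ℝ phiFlat p (e1Flat p) = 0 := by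
  rw [fderiv_phiFlat_apply, e1Flat]
  ring

theorem fderiv_phiFlat_e2Flat (p : ℝ × ℝ × ℝ) : fderiv ℝ phiFlat p (e2Flat p) = 0 := by
  rw [fderiv_phiFlat_apply, e2Flat]
  ring

theorem fderiv_phiFlat_e3Flat (p : ℝ × ℝ × ℝ) :
    fderiv ℝ phiFlat p (e3Flat p) = 2 * phiFlat p := by
  rw [fderiv_phiFlat_apply, e3Flat, phiFlat]
  ring

theorem fderiv_phiFlat_e4Flat (p : ℝ × ℝ × ℝ) : fderiv ℝ phiFlat p (e4Flat p) = 0 := by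
  rw [fderiv_phiFlat_apply, e4Flat]
  ring

/-- Identically on `ℝ³`: `e₁(φ) = 0`, `e₂(φ) = 0`, `e₃(φ) = 2φ`, `e₄(φ) = 0`; in particular
all four vector fields are tangent to `{φ = 0}` at every point of `{φ = 0}`. -/
theorem flat_model_tangency :
    (∀ p : ℝ × ℝ × ℝ,
      fderiv ℝ phiFlat p (e1Flat p) = 0 ∧
      fderiv ℝ phiFlat p (e2Flat p) = 0 ∧
      fderiv ℝ phiFlat p (e3Flat p) = 2 * phiFlat p ∧
      fderiv ℝ phiFlat p (e4Flat p) = 0) ∧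
    (∀ p : ℝ × ℝ × ℝ, phiFlat p = 0 →
      fderiv ℝ phiFlat p (e1Flat p) = 0 ∧
      fderiv ℝ phiFlat p (e2Flat p) = 0 ∧
      fderiv ℝ phiFlat p (e3Flat p) = 0 ∧
      fderiv ℝ phiFlat p (e4Flat p) = 0) := by
  refine ⟨fun p => ⟨fderiv_phiFlat_e1Flat p, fderiv_phiFlat_e2Flat p, fderiv_phiFlat_e3Flat p,
    fderiv_phiFlat_e4Flat p⟩, fun p hp => ?_⟩
  refine ⟨fderiv_phiFlat_e1Flat p, fderiv_phiFlat_e2Flat p, ?_, fderiv_phiFlat_e4Flat p⟩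
  rw [fderiv_phiFlat_e3Flat, hp, mul_zero]
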